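/- Let r be a noncommutative rational expression in the variables ⋃_i X^(i). Suppose (a^(1), a^(2),…,a^(G)) lies in the mp-domain of r at level (n_1, n_2,…,n_G) and (a'^(1), a^(2),…,a^(G)) lies in the mp-domain of r at level (n'_1, n_2,…,n_G). Let v ∈ k^{g_1} and for 1 ≤ j ≤ g_1 set A_j = [[a'^(1)_j ⊗ I_{n_1}, v_j · I_{n'_1} ⊗ I_{n_1}], [0, I_{n'_1} ⊗ a^(1)_j]] ∈ Mat_{2 n'_1 n_1}(k) (a 2×2 block matrix with blocks of size n'_1 n_1). Then ((A_1,…,A_{g_1}), a^(2),…,a^(G)) lies in the mp-domain of r at level (2 n'_1 n_1, n_2,…,n_G), and under the natural block identification one has r((A_1,…,A_{g_1}), a^(2),…,a^(G))^mp = [[r((a'^(1)_j ⊗ I_{n_1})_j, a^(2),…,a^(G))^mp, E], [0, r((I_{n'_1} ⊗ a^(1)_j)_j, a^(2),…,a^(G))^mp]], where E is the evaluation of the rational expression v·Δ^(1)(r) = Σ_j v_j Δ^(1)_j(r) at the assignment X'^(1)_j ↦ τ_1(a'^(1)_j ⊗ I_{n_1}), X^(1)_j ↦ τ_1(I_{n'_1}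 ⊗ a^(1)_j), X^(i)_j ↦ τ_i(a^(i)_j) for i ≥ 2 (all in Mat_{n'_1 n_1 · n_2⋯n_G}(k)); in particular all displayed evaluations are defined. -/

import Mathlib

/-!
Noncommutative rational expressions and multipartite (mp) evaluations,
following "Multipartite rational functions" by Klep, Vinnikov, Volčič.
-/

/-- Formal noncommutative rational expressions over `k` in variables `X`. -/
inductive RatExpr (k : Type*) (X : Type*) : Type _
  | const : k → RatExpr k X
  | var : X → RatExpr k X
  | add : RatExpr k X → RatExpr k X → RatExpr k X
  | mul : RatExpr k X → RatExpr k X → RatExpr k X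
  | inv : RatExpr k X → RatExpr k X

open Classical in
/-- Partial evaluation of a rational expression in a `k`-algebra `R`,
given an assignment `f` of the variables. An inverse is evaluated only
when the evaluation of the sub-expression is invertible (a unit) in `R`. -/
noncomputable def RatExpr.eval {k X R : Type*} [CommRing k] [Ring R] [Algebra k R]
    (f : X → R) : RatExpr k X → Option R
  | .const c => some (algebraMap k R c)
  | .var x => some (f x)
  | .add r s => (r.eval f).bind fun a => (s.eval f).map fun b => a + b
  | .mul r s => (r.eval f).bind fun a => (s.eval f).map fun b => a * b
  | .inv r => (r.eval f).bind fun a => if IsUnit a then some (Ring.inverse a) else none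

/-- `tau n i A = I ⊗ ⋯ ⊗ A ⊗ ⋯ ⊗ I`, the Kronecker product with `A` in the `i`-th
slot and identity matrices elsewhere, realized on the index set `∀ j, Fin (n j)`. -/
def tau {k : Type*} [CommRing k] {ι : Type*} [Fintype ι] [DecidableEq ι]
    (n : ι → ℕ) (i : ι) (A : Matrix (Fin (n i)) (Fin (n i)) k) :
    Matrix (∀ j, Fin (n j)) (∀ j, Fin (n j)) k :=
  Matrix.of fun α β =>
    A (α i) (β i) * ∏ j ∈ Finset.univ.erase i, (if α j = β j then (1 : k) else 0)

/-- The mp-evaluation of a rational expression in the variables `Σ i, Fin (g i)`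
at the tuple `a` at level `n`:  `X^(i)_j` is sent to `tau n i (a i j)`.
The result is `none` exactly when `a` is not in the mp-domain of `r` at level `n`. -/
noncomputable def mpEval {k : Type*} [Field k] {ι : Type*} [Fintype ι] [DecidableEq ι]
    (g n : ι → ℕ) (r : RatExpr k (Σ i : ι, Fin (g i)))
    (a : ∀ i, Fin (g i) → Matrix (Fin (n i)) (Fin (n i)) k) :
    Option (Matrix (∀ j, Fin (n j)) (∀ j, Fin (n j)) k) :=
  r.eval fun v => tau n v.1 (a v.1 v.2)

open scoped Kronecker

section FirstPartSpecial

variable {k : Type*} [Field k] {G : ℕ} (g₁ : ℕ) (g n : Fin G → ℕ)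

/-- `tau` for the distinguished first tensor factor, whose index type is `d`:
`A ⊗ I_{n_2} ⊗ ⋯ ⊗ I_{n_G}`. -/
def tauFst {d : Type*} [Fintype d] [DecidableEq d] (A : Matrix d d k) :
    Matrix (d × ∀ j, Fin (n j)) (d × ∀ j, Fin (n j)) k :=
  Matrix.of fun α β => A α.1 β.1 * (if α.2 = β.2 then (1 : k) else 0)

/-- `tau` for the remaining tensor factors: `I_d ⊗ I ⊗ ⋯ ⊗ A ⊗ ⋯ ⊗ I` with `A` in slot `i`
of the tail. -/
def tauTail {d : Type*} [Fintype d] [DecidableEq d] (i : Fin G)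
    (A : Matrix (Fin (n i)) (Fin (n i)) k) :
    Matrix (d × ∀ j, Fin (n j)) (d × ∀ j, Fin (n j)) k :=
  Matrix.of fun α β => (if α.1 = β.1 then (1 : k) else 0) * A (α.2 i) (β.2 i) *
    ∏ j ∈ Finset.univ.erase i, (if α.2 j = β.2 j then (1 : k) else 0)

/-- mp-evaluation of a rational expression in the variables `X^(1) ∪ (X^(2) ∪ ⋯ ∪ X^(G))`,
the first part evaluated at matrices indexed by a type `d`, the remaining parts at matrices
of sizes `n_i`. -/
noncomputable def mpEvalFst (r : RatExpr k ((Fin g₁) ⊕ (Σ i : Fin G, Fin (g i))))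
    {d : Type*} [Fintype d] [DecidableEq d]
    (a₁ : Fin g₁ → Matrix d d k)
    (a : ∀ i, Fin (g i) → Matrix (Fin (n i)) (Fin (n i)) k) :
    Option (Matrix (d × ∀ j, Fin (n j)) (d × ∀ j, Fin (n j)) k) :=
  r.eval (Sum.elim (fun j => tauFst n (a₁ j)) (fun v => tauTail n v.1 (a v.1 v.2)))

end FirstPartSpecial

/-- Renaming of variables in a rational expression. -/
def RatExpr.rename {k X Y : Type*} (f : X → Y) : RatExpr k X → RatExpr k Y
  | .const c => .const c
  | .var x => .var (f x)
  | .add r s => .add (r.rename f) (s.rename f)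
  | .mul r s => .mul (r.rename f) (s.rename f)
  | .inv r => .inv (r.rename f)

/-- The formal sum of a list of rational expressions. -/
def sumList {k X : Type*} [CommRing k] : List (RatExpr k X) → RatExpr k X
  | [] => .const 0
  | e :: l => .add e (sumList l)

/-- The substitution `X^(1)_ℓ ↦ X'^(1)_ℓ` (primed copy in the left summand), keeping the
other variables. -/
def primeMap {G : ℕ} (g₁ : ℕ) (g : Fin G → ℕ) :
    (Fin g₁) ⊕ (Σ i : Fin G, Fin (g i)) →
    (Fin g₁) ⊕ ((Fin g₁) ⊕ (Σ i : Fin G, Fin (g i))) :=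
  Sum.elim Sum.inl (fun w => Sum.inr (Sum.inr w))

/-- The partial difference-differential operator `Δ^(1)_j` with respect to the `j`-th
variable of the first part, mapping rational expressions in `X^(1) ∪ ⋯ ∪ X^(G)` to rational
expressions in `X'^(1) ∪ (X^(1) ∪ ⋯ ∪ X^(G))`:
`Δ(α) = 0`, `Δ(X^(1)_ℓ) = δ_{ℓj}`, `Δ(X^(i)_ℓ) = 0` for `i ≥ 2`, `Δ(r+s) = Δr + Δs`,
`Δ(rs) = r'·Δs + Δr·s` and `Δ(r⁻¹) = −(r')⁻¹·Δr·r⁻¹`. -/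
def deltaOne {k : Type*} [CommRing k] {G : ℕ} {g₁ : ℕ} {g : Fin G → ℕ} (j : Fin g₁) :
    RatExpr k ((Fin g₁) ⊕ (Σ i : Fin G, Fin (g i))) →
    RatExpr k ((Fin g₁) ⊕ ((Fin g₁) ⊕ (Σ i : Fin G, Fin (g i))))
  | .const _ => .const 0
  | .var (.inl ℓ) => if ℓ = j then .const 1 else .const 0
  | .var (.inr _) => .const 0
  | .add r s => .add (deltaOne j r) (deltaOne j s)
  | .mul r s => .add (.mul (r.rename (primeMap g₁ g)) (deltaOne j s))
      (.mul (deltaOne j r) (s.rename Sum.inr))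
  | .inv r => .mul (.const (-1))
      (.mul (.mul (.inv (r.rename (primeMap g₁ g))) (deltaOne j r))
        (.inv (r.rename Sum.inr)))
/-!
Evaluating a rational expression at block upper-triangular matrices `[[A', V], [0, A]]` gives a
block upper-triangular matrix whose diagonal blocks are the evaluations at `A'` and at `A`.
The corner block transforms under sums, products and inverses
(the corner of `[[A', V], [0, A]]⁻¹` is `-A'⁻¹ V A⁻¹`) exactly as `Δ^(1)` prescribes, so by
induction it is the evaluation of `v·Δ^(1)(r)`. The points `(a' ⊗ I, a^(2), …)` and
`(I ⊗ a, a^(2), …)` lie in the domain since they are the images of `(a', a^(2), …)` and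
`(a, a^(2), …)` under the algebra embeddings `M ↦ M ⊗ I` and `M ↦ I ⊗ M`, and `τ₁` of a block
matrix is, up to reindexing, the block matrix of the `τ₁`s.
-/

theorem map_ringInverse {F M₀ N₀ : Type*} [MonoidWithZero M₀] [MonoidWithZero N₀]
    [FunLike F M₀ N₀] [MonoidHomClass F M₀ N₀] (φ : F) {a : M₀} (h : IsUnit a) :
    φ (Ring.inverse a) = Ring.inverse (φ a) := by
  rw [eq_comm, ← mul_one (Ring.inverse (φ a)), Ring.inverse_mul_eq_iff_eq_mul _ _ _ (h.map φ),
    ← map_mul, Ring.mul_inverse_cancel a h, map_one]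

namespace Matrix

variable {m n α : Type*} [Fintype m] [Fintype n] [CommRing α]

theorem fromBlocks_zero₂₁_mul_fromBlocks_zero₂₁ (A A' : Matrix m m α) (B B' : Matrix m n α)
    (D D' : Matrix n n α) :
    fromBlocks A B 0 D * fromBlocks A' B' 0 D' =
      fromBlocks (A * A') (A * B' + B * D') 0 (D * D') := by
  simp [fromBlocks_multiply]

variable [DecidableEq m] [DecidableEq n]

theorem ringInverse_fromBlocks_zero₂₁ {A : Matrix m m α} (B : Matrix m n α) {D : Matrix n n α}
    (hA : IsUnit A) (hD : IsUnit D) :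
    Ring.inverse (fromBlocks A B 0 D) =
      fromBlocks (Ring.inverse A) (-(Ring.inverse A * B * Ring.inverse D)) 0 (Ring.inverse D) := by
  simp only [← nonsing_inv_eq_ringInverse]
  exact inv_fromBlocks_zero₂₁_of_isUnit_iff A B D (iff_of_true hA hD)

theorem fromBlocks_algebraMap (c : α) :
    fromBlocks (algebraMap α (Matrix m m α) c) 0 0 (algebraMap α (Matrix n n α) c) =
      algebraMap α _ c := by
  simp only [Algebra.algebraMap_eq_smul_one, ← fromBlocks_one, fromBlocks_smul, smul_zero]

end Matrix

namespace RatExpr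

variable {k X Y R S : Type*} [CommRing k] [Ring R] [Ring S] [Algebra k R] [Algebra k S]

theorem eval_rename (h : X → Y) (f : Y → R) (r : RatExpr k X) :
    (r.rename h).eval f = r.eval (f ∘ h) := by
  induction r <;> simp [rename, eval, *]

theorem eval_add_eq_some {f : X → R} {r s : RatExpr k X} {E : R} :
    (add r s).eval f = some E ↔ ∃ A B, r.eval f = some A ∧ s.eval f = some B ∧ A + B = E := by
  simp [eval, Option.bind_eq_some_iff, Option.map_eq_some_iff]

theorem eval_mul_eq_some {f : X → R} {r s : RatExpr k X} {E : R} :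
    (mul r s).eval f = some E ↔ ∃ A B, r.eval f = some A ∧ s.eval f = some B ∧ A * B = E := by
  simp [eval, Option.bind_eq_some_iff, Option.map_eq_some_iff]

theorem eval_inv_eq_some {f : X → R} {r : RatExpr k X} {E : R} :
    (inv r).eval f = some E ↔ ∃ A, r.eval f = some A ∧ IsUnit A ∧ Ring.inverse A = E := by
  simp [eval, Option.bind_eq_some_iff]

theorem eval_algHom_comp (φ : R →ₐ[k] S) (f : X → R) {r : RatExpr k X} {E : R}
    (h : r.eval f = some E) : r.eval (φ ∘ f) = some (φ E) := by
  induction r generalizing E with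
  | const c =>
    simp only [eval, Option.some_inj] at h ⊢
    rw [← h, AlgHom.commutes]
  | var x => simp_all [eval]
  | add r s ihr ihs =>
    obtain ⟨A, B, hA, hB, rfl⟩ := eval_add_eq_some.mp h
    exact eval_add_eq_some.mpr ⟨φ A, φ B, ihr hA, ihs hB, (map_add φ A B).symm⟩
  | mul r s ihr ihs =>
    obtain ⟨A, B, hA, hB, rfl⟩ := eval_mul_eq_some.mp h
    exact eval_mul_eq_some.mpr ⟨φ A, φ B, ihr hA, ihs hB, (map_mul φ A B).symm⟩
  | inv r ih =>
    obtain ⟨A, hA, hu, rfl⟩ := eval_inv_eq_some.mp h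
    exact eval_inv_eq_some.mpr ⟨φ A, ih hA, hu.map φ, (map_ringInverse φ hu).symm⟩

theorem eval_sumList_ofFn (f : X → R) {N : ℕ} (s : Fin N → RatExpr k X) (E : Fin N → R)
    (h : ∀ j, (s j).eval f = some (E j)) :
    (sumList (List.ofFn s)).eval f = some (∑ j, E j) := by
  induction N with
  | zero => simp [sumList, eval]
  | succ N ih =>
    rw [List.ofFn_succ, Fin.sum_univ_succ]
    exact eval_add_eq_some.mpr ⟨_, _, h 0, ih _ _ fun j => h j.succ, rfl⟩

end RatExpr

section UpperBlock

open RatExpr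

variable {k : Type*} [CommRing k] {G g₁ : ℕ} {g : Fin G → ℕ}

section Leibniz

variable {R : Type*} [Ring R] [Algebra k R]
  {F : Fin g₁ ⊕ (Fin g₁ ⊕ (Σ i : Fin G, Fin (g i))) → R} {j : Fin g₁}

theorem RatExpr.eval_deltaOne_var (x : Fin g₁ ⊕ (Σ i : Fin G, Fin (g i))) :
    (deltaOne j (var x : RatExpr k _)).eval F =
      some (Sum.elim (fun ℓ => if ℓ = j then 1 else 0) 0 x) := by
  rcases x with ℓ | w
  · by_cases h : ℓ = j <;> simp [deltaOne, eval, h]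
  · simp [deltaOne, eval]

theorem RatExpr.eval_deltaOne_mul {r s : RatExpr k (Fin g₁ ⊕ (Σ i : Fin G, Fin (g i)))}
    {A B Dr Ds : R} (hA : r.eval (F ∘ primeMap g₁ g) = some A)
    (hB : s.eval (F ∘ Sum.inr) = some B) (hDr : (deltaOne j r).eval F = some Dr)
    (hDs : (deltaOne j s).eval F = some Ds) :
    (deltaOne j (mul r s)).eval F = some (A * Ds + Dr * B) := by
  rw [← eval_rename] at hA hB
  exact eval_add_eq_some.mpr ⟨_, _, eval_mul_eq_some.mpr ⟨_, _, hA, hDs, rfl⟩,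
    eval_mul_eq_some.mpr ⟨_, _, hDr, hB, rfl⟩, rfl⟩

theorem RatExpr.eval_deltaOne_inv {r : RatExpr k (Fin g₁ ⊕ (Σ i : Fin G, Fin (g i)))}
    {A B D : R} (hA : r.eval (F ∘ primeMap g₁ g) = some A) (huA : IsUnit A)
    (hB : r.eval (F ∘ Sum.inr) = some B) (huB : IsUnit B)
    (hD : (deltaOne j r).eval F = some D) :
    (deltaOne j (inv r)).eval F = some (-(Ring.inverse A * D * Ring.inverse B)) := by
  rw [← eval_rename] at hA hB
  simp [deltaOne, eval, hA, hB, hD, huA, huB]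

end Leibniz

variable {m : Type*} [Fintype m] [DecidableEq m]

def upperBlockAssignment (F : Fin g₁ ⊕ (Fin g₁ ⊕ (Σ i : Fin G, Fin (g i))) → Matrix m m k)
    (v : Fin g₁ → k) (x : Fin g₁ ⊕ (Σ i : Fin G, Fin (g i))) : Matrix (m ⊕ m) (m ⊕ m) k :=
  Matrix.fromBlocks (F (primeMap g₁ g x)) (Sum.elim (fun ℓ => v ℓ • 1) 0 x) 0 (F (Sum.inr x))

theorem RatExpr.exists_eval_upperBlockAssignment
    (F : Fin g₁ ⊕ (Fin g₁ ⊕ (Σ i : Fin G, Fin (g i))) → Matrix m m k) (v : Fin g₁ → k)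
    (s : RatExpr k (Fin g₁ ⊕ (Σ i : Fin G, Fin (g i)))) {E₁ E₂ : Matrix m m k}
    (h₁ : s.eval (F ∘ primeMap g₁ g) = some E₁) (h₂ : s.eval (F ∘ Sum.inr) = some E₂) :
    ∃ D : Fin g₁ → Matrix m m k, (∀ j, (deltaOne j s).eval F = some (D j)) ∧
      s.eval (upperBlockAssignment F v) = some (Matrix.fromBlocks E₁ (∑ j, v j • D j) 0 E₂) := by
  induction s generalizing E₁ E₂ with
  | const c =>
    simp only [eval, Option.some_inj] at h₁ h₂
    subst h₁ h₂
    refine ⟨0, fun j => by simp [deltaOne, eval], ?_⟩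
    simp [eval, Matrix.fromBlocks_algebraMap]
  | var x =>
    simp only [eval, Option.some_inj] at h₁ h₂
    subst h₁ h₂
    refine ⟨_, fun j => eval_deltaOne_var x, ?_⟩
    rcases x with ℓ | w <;> simp [eval, upperBlockAssignment, smul_ite]
  | add r s ihr ihs =>
    obtain ⟨A₁, B₁, hA₁, hB₁, rfl⟩ := eval_add_eq_some.mp h₁
    obtain ⟨A₂, B₂, hA₂, hB₂, rfl⟩ := eval_add_eq_some.mp h₂
    obtain ⟨Dr, hDr, hr⟩ := ihr hA₁ hA₂
    obtain ⟨Ds, hDs, hs⟩ := ihs hB₁ hB₂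
    refine ⟨Dr + Ds, fun j => eval_add_eq_some.mpr ⟨_, _, hDr j, hDs j, rfl⟩,
      eval_add_eq_some.mpr ⟨_, _, hr, hs, ?_⟩⟩
    simp [Matrix.fromBlocks_add, smul_add, Finset.sum_add_distrib]
  | mul r s ihr ihs =>
    obtain ⟨A₁, B₁, hA₁, hB₁, rfl⟩ := eval_mul_eq_some.mp h₁
    obtain ⟨A₂, B₂, hA₂, hB₂, rfl⟩ := eval_mul_eq_some.mp h₂
    obtain ⟨Dr, hDr, hr⟩ := ihr hA₁ hA₂
    obtain ⟨Ds, hDs, hs⟩ := ihs hB₁ hB₂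
    refine ⟨_, fun j => eval_deltaOne_mul hA₁ hB₂ (hDr j) (hDs j),
      eval_mul_eq_some.mpr ⟨_, _, hr, hs, ?_⟩⟩
    simp [Matrix.fromBlocks_zero₂₁_mul_fromBlocks_zero₂₁, Finset.mul_sum, Finset.sum_mul,
      smul_add, Finset.sum_add_distrib]
  | inv r ih =>
    obtain ⟨A₁, hA₁, hu₁, rfl⟩ := eval_inv_eq_some.mp h₁
    obtain ⟨A₂, hA₂, hu₂, rfl⟩ := eval_inv_eq_some.mp h₂
    obtain ⟨D, hD, hr⟩ := ih hA₁ hA₂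
    refine ⟨_, fun j => eval_deltaOne_inv hA₁ hu₁ hA₂ hu₂ (hD j),
      eval_inv_eq_some.mpr ⟨_, hr, Matrix.isUnit_fromBlocks_zero₂₁.mpr ⟨hu₁, hu₂⟩, ?_⟩⟩
    simp [Matrix.ringInverse_fromBlocks_zero₂₁ _ hu₁ hu₂, Finset.mul_sum, Finset.sum_mul]

end UpperBlock

theorem elim_comp_primeMap {G g₁ : ℕ} {g : Fin G → ℕ} {α : Type*} (f f' : Fin g₁ → α)
    (t : (Σ i : Fin G, Fin (g i)) → α) :
    Sum.elim f (Sum.elim f' t) ∘ primeMap g₁ g = Sum.elim f t := by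
  funext x
  rcases x with ℓ | w <;> rfl

namespace Matrix

variable (k : Type*) [CommRing k] (m e P : Type*) [Fintype m] [DecidableEq m] [Fintype e]
  [DecidableEq e] [Fintype P] [DecidableEq P]

def kroneckerOneAlgHom : Matrix m m k →ₐ[k] Matrix (m × e) (m × e) k where
  toFun M := M ⊗ₖ (1 : Matrix e e k)
  map_one' := one_kronecker_one
  map_mul' M N := by rw [← mul_kronecker_mul, one_mul]
  map_zero' := zero_kronecker 1
  map_add' M N := add_kronecker M N 1
  commutes' c := by
    simp only [Algebra.algebraMap_eq_smul_one, smul_kronecker, one_kronecker_one]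

def oneKroneckerAlgHom : Matrix m m k →ₐ[k] Matrix (e × m) (e × m) k where
  toFun M := (1 : Matrix e e k) ⊗ₖ M
  map_one' := one_kronecker_one
  map_mul' M N := by rw [← mul_kronecker_mul, one_mul]
  map_zero' := kronecker_zero 1
  map_add' M N := kronecker_add 1 M N
  commutes' c := by
    simp only [Algebra.algebraMap_eq_smul_one, kronecker_smul, one_kronecker_one]

def kroneckerOneFst : Matrix (m × P) (m × P) k →ₐ[k] Matrix ((m × e) × P) ((m × e) × P) k :=
  (reindexAlgEquiv k k
    { toFun := fun x => ((x.1.1, x.2), x.1.2)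
      invFun := fun y => ((y.1.1, y.2), y.1.2)
      left_inv := fun _ => rfl
      right_inv := fun _ => rfl }).toAlgHom.comp (kroneckerOneAlgHom k (m × P) e)

def oneKroneckerFst : Matrix (m × P) (m × P) k →ₐ[k] Matrix ((e × m) × P) ((e × m) × P) k :=
  (reindexAlgEquiv k k (Equiv.prodAssoc e m P).symm).toAlgHom.comp
    (oneKroneckerAlgHom k (m × P) e)

variable {k m e P}

theorem kroneckerOneFst_apply (M : Matrix (m × P) (m × P) k) (x y : (m × e) × P) :
    kroneckerOneFst k m e P M x y = M (x.1.1, x.2) (y.1.1, y.2) * (1 : Matrix e e k) x.1.2 y.1.2 :=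
  rfl

theorem oneKroneckerFst_apply (M : Matrix (m × P) (m × P) k) (x y : (e × m) × P) :
    oneKroneckerFst k m e P M x y = (1 : Matrix e e k) x.1.1 y.1.1 * M (x.1.2, x.2) (y.1.2, y.2) :=
  rfl

end Matrix

section Tau

open Matrix

variable {k : Type*} [Field k] {G : ℕ} {n : Fin G → ℕ} {d e : Type*} [Fintype d] [DecidableEq d]
  [Fintype e] [DecidableEq e]

theorem kroneckerOneFst_tauFst (A : Matrix d d k) :
    kroneckerOneFst k d e _ (tauFst n A) = tauFst n (A ⊗ₖ (1 : Matrix e e k)) := by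
  ext x y
  simp only [kroneckerOneFst_apply, tauFst, of_apply, kroneckerMap_apply, one_apply]
  ring

theorem oneKroneckerFst_tauFst (A : Matrix d d k) :
    oneKroneckerFst k d e _ (tauFst n A) = tauFst n ((1 : Matrix e e k) ⊗ₖ A) := by
  ext x y
  simp only [oneKroneckerFst_apply, tauFst, of_apply, kroneckerMap_apply, one_apply]
  ring

theorem kroneckerOneFst_tauTail (i : Fin G) (B : Matrix (Fin (n i)) (Fin (n i)) k) :
    kroneckerOneFst k d e _ (tauTail n i B) = tauTail (d := d × e) n i B := by
  ext x y
  simp only [kroneckerOneFst_apply, tauTail, of_apply, one_apply, Prod.ext_iff]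
  by_cases h₁ : x.1.1 = y.1.1 <;> by_cases h₂ : x.1.2 = y.1.2 <;> simp [h₁, h₂]

theorem oneKroneckerFst_tauTail (i : Fin G) (B : Matrix (Fin (n i)) (Fin (n i)) k) :
    oneKroneckerFst k d e _ (tauTail n i B) = tauTail (d := e × d) n i B := by
  ext x y
  simp only [oneKroneckerFst_apply, tauTail, of_apply, one_apply, Prod.ext_iff]
  by_cases h₁ : x.1.1 = y.1.1 <;> by_cases h₂ : x.1.2 = y.1.2 <;> simp [h₁, h₂]

theorem tauFst_smul_one (c : k) : tauFst n (c • (1 : Matrix d d k)) = c • 1 := by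
  ext x y
  simp only [tauFst, of_apply, Matrix.smul_apply, Matrix.one_apply, Prod.ext_iff]
  by_cases h₁ : x.1 = y.1 <;> by_cases h₂ : x.2 = y.2 <;> simp [h₁, h₂]

theorem tauFst_zero : tauFst n (0 : Matrix d d k) = 0 := by
  ext x y
  simp [tauFst]

theorem tauFst_fromBlocks (A B C D : Matrix d d k) :
    tauFst n (fromBlocks A B C D) =
      reindex (Equiv.sumProdDistrib d d _).symm (Equiv.sumProdDistrib d d _).symm
        (fromBlocks (tauFst n A) (tauFst n B) (tauFst n C) (tauFst n D)) := by
  ext ⟨x | x, α⟩ ⟨y | y, β⟩ <;> simp [tauFst]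

theorem tauTail_sum (i : Fin G) (B : Matrix (Fin (n i)) (Fin (n i)) k) :
    tauTail (d := d ⊕ d) n i B =
      reindex (Equiv.sumProdDistrib d d _).symm (Equiv.sumProdDistrib d d _).symm
        (fromBlocks (tauTail n i B) 0 0 (tauTail n i B)) := by
  ext ⟨x | x, α⟩ ⟨y | y, β⟩ <;> simp [tauTail]

end Tau

section MpEval

open Matrix RatExpr

variable {k : Type*} [Field k] {G g₁ : ℕ} {g n : Fin G → ℕ}
  (r : RatExpr k (Fin g₁ ⊕ (Σ i : Fin G, Fin (g i)))) {d e : Type*} [Fintype d] [DecidableEq d]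
  [Fintype e] [DecidableEq e] (a₂ : ∀ i, Fin (g i) → Matrix (Fin (n i)) (Fin (n i)) k)

def primedMpAssignment (b' b : Fin g₁ → Matrix d d k) :
    Fin g₁ ⊕ (Fin g₁ ⊕ (Σ i : Fin G, Fin (g i))) →
      Matrix (d × ∀ j, Fin (n j)) (d × ∀ j, Fin (n j)) k :=
  Sum.elim (fun ℓ => tauFst n (b' ℓ))
    (Sum.elim (fun ℓ => tauFst n (b ℓ)) (fun w => tauTail n w.1 (a₂ w.1 w.2)))

theorem mpEvalFst_kronecker_one {b : Fin g₁ → Matrix d d k} {E : Matrix _ _ k}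
    (h : mpEvalFst g₁ g n r b a₂ = some E) :
    mpEvalFst g₁ g n r (fun ℓ => b ℓ ⊗ₖ (1 : Matrix e e k)) a₂ =
      some (kroneckerOneFst k d e _ E) := by
  unfold mpEvalFst at h ⊢
  convert eval_algHom_comp (kroneckerOneFst k d e _) _ h using 2
  funext x
  rcases x with ℓ | w
  exacts [(kroneckerOneFst_tauFst _).symm, (kroneckerOneFst_tauTail _ _).symm]

theorem mpEvalFst_one_kronecker {b : Fin g₁ → Matrix d d k} {E : Matrix _ _ k}
    (h : mpEvalFst g₁ g n r b a₂ = some E) :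
    mpEvalFst g₁ g n r (fun ℓ => (1 : Matrix e e k) ⊗ₖ b ℓ) a₂ =
      some (oneKroneckerFst k d e _ E) := by
  unfold mpEvalFst at h ⊢
  convert eval_algHom_comp (oneKroneckerFst k d e _) _ h using 2
  funext x
  rcases x with ℓ | w
  exacts [(oneKroneckerFst_tauFst _).symm, (oneKroneckerFst_tauTail _ _).symm]

theorem mpEvalFst_fromBlocks (v : Fin g₁ → k) {b' b : Fin g₁ → Matrix d d k} {E₁ E₂ : Matrix _ _ k}
    (h₁ : mpEvalFst g₁ g n r b' a₂ = some E₁) (h₂ : mpEvalFst g₁ g n r b a₂ = some E₂) :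
    ∃ D : Fin g₁ → Matrix (d × ∀ j, Fin (n j)) (d × ∀ j, Fin (n j)) k,
      (∀ j, (deltaOne j r).eval (primedMpAssignment a₂ b' b) = some (D j)) ∧
      mpEvalFst g₁ g n r (fun j => fromBlocks (b' j) (v j • 1) 0 (b j)) a₂ =
        some (reindex (Equiv.sumProdDistrib _ _ _).symm (Equiv.sumProdDistrib _ _ _).symm
          (fromBlocks E₁ (∑ j, v j • D j) 0 E₂)) := by
  obtain ⟨D, hD, hblock⟩ := r.exists_eval_upperBlockAssignment (primedMpAssignment a₂ b' b) v
    (by rwa [primedMpAssignment, elim_comp_primeMap])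
    (by rwa [primedMpAssignment, Sum.elim_comp_inr])
  refine ⟨D, hD, ?_⟩
  rw [mpEvalFst]
  convert eval_algHom_comp (reindexAlgEquiv k k (Equiv.sumProdDistrib d d _).symm).toAlgHom _
    hblock using 2
  funext x
  rcases x with ℓ | w
  · simp [upperBlockAssignment, primedMpAssignment, primeMap, tauFst_fromBlocks,
      tauFst_smul_one, tauFst_zero]
  · simp [upperBlockAssignment, primedMpAssignment, primeMap, tauTail_sum]
  · rfl

end MpEval

theorem mp_difference_differential_formula_general {k : Type*} [Field k]
    {G : ℕ} (g₁ : ℕ) (g n : Fin G → ℕ) (n₁ n₁' : ℕ)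
    (r : RatExpr k ((Fin g₁) ⊕ (Σ i : Fin G, Fin (g i))))
    (a : Fin g₁ → Matrix (Fin n₁) (Fin n₁) k)
    (a' : Fin g₁ → Matrix (Fin n₁') (Fin n₁') k)
    (a₂ : ∀ i, Fin (g i) → Matrix (Fin (n i)) (Fin (n i)) k)
    (ha : ∃ E, mpEvalFst g₁ g n r a a₂ = some E)
    (ha' : ∃ E, mpEvalFst g₁ g n r a' a₂ = some E)
    (v : Fin g₁ → k) :
    ∃ (E₁ E₂ Ed : Matrix ((Fin n₁' × Fin n₁) × ∀ j, Fin (n j))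
        ((Fin n₁' × Fin n₁) × ∀ j, Fin (n j)) k),
      mpEvalFst g₁ g n r (fun ℓ => a' ℓ ⊗ₖ (1 : Matrix (Fin n₁) (Fin n₁) k)) a₂ = some E₁ ∧
      mpEvalFst g₁ g n r (fun ℓ => (1 : Matrix (Fin n₁') (Fin n₁') k) ⊗ₖ a ℓ) a₂ = some E₂ ∧
      RatExpr.eval
        (Sum.elim (fun ℓ => tauFst n (a' ℓ ⊗ₖ (1 : Matrix (Fin n₁) (Fin n₁) k)))
          (Sum.elim (fun ℓ => tauFst n ((1 : Matrix (Fin n₁') (Fin n₁') k) ⊗ₖ a ℓ))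
            (fun w => tauTail n w.1 (a₂ w.1 w.2))))
        (sumList (List.ofFn fun j => RatExpr.mul (.const (v j)) (deltaOne j r)))
        = some Ed ∧
      mpEvalFst g₁ g n r
        (fun j => Matrix.fromBlocks
          (a' j ⊗ₖ (1 : Matrix (Fin n₁) (Fin n₁) k))
          (v j • (1 : Matrix (Fin n₁' × Fin n₁) (Fin n₁' × Fin n₁) k))
          0
          ((1 : Matrix (Fin n₁') (Fin n₁') k) ⊗ₖ a j)) a₂
      = some (Matrix.reindex (Equiv.sumProdDistrib _ _ _).symm
          (Equiv.sumProdDistrib _ _ _).symm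
          (Matrix.fromBlocks E₁ Ed 0 E₂)) := by
  obtain ⟨E, hE⟩ := ha
  obtain ⟨E', hE'⟩ := ha'
  have h₁ := mpEvalFst_kronecker_one r a₂ (e := Fin n₁) hE'
  have h₂ := mpEvalFst_one_kronecker r a₂ (e := Fin n₁') hE
  obtain ⟨D, hD, hblock⟩ := mpEvalFst_fromBlocks r a₂ v h₁ h₂
  refine ⟨_, _, ∑ j, v j • D j, h₁, h₂, ?_, hblock⟩
  refine RatExpr.eval_sumList_ofFn _ _ _ fun j => RatExpr.eval_mul_eq_some.mpr
    ⟨_, _, rfl, hD j, (Algebra.smul_def _ _).symm⟩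

/-- Proposition 5.1, the difference-differential formula. Suppose
`(a^(1), a^(2), …, a^(G))` and `(a'^(1), a^(2), …, a^(G))` lie in the mp-domains of `r` at
levels `(n₁, n₂, …, n_G)` and `(n₁', n₂, …, n_G)` respectively, and let `v ∈ k^{g₁}`. Then
the evaluations of `r` at `(a'^(1) ⊗ I, tail)` and `(I ⊗ a^(1), tail)`, and of
`v·Δ^(1)(r) = Σ_j v_j Δ^(1)_j(r)` at the corresponding point, are all defined, the tuple of
`2×2` block matrices `A_j = [[a'^(1)_j ⊗ I, v_j·I],[0, I ⊗ a^(1)_j]]` together with the tail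
lies in the mp-domain of `r`, and under the natural block identification
`r(A, tail)^mp = [[r(a'⊗I, tail)^mp, (v·Δ^(1)r)(a'⊗I, I⊗a, tail)], [0, r(I⊗a, tail)^mp]]`. -/
theorem mp_difference_differential_formula {k : Type*} [Field k] [CharZero k]
    {G : ℕ} (g₁ : ℕ) (g n : Fin G → ℕ) (n₁ n₁' : ℕ)
    (r : RatExpr k ((Fin g₁) ⊕ (Σ i : Fin G, Fin (g i))))
    (a : Fin g₁ → Matrix (Fin n₁) (Fin n₁) k)
    (a' : Fin g₁ → Matrix (Fin n₁') (Fin n₁') k)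
    (a₂ : ∀ i, Fin (g i) → Matrix (Fin (n i)) (Fin (n i)) k)
    (ha : ∃ E, mpEvalFst g₁ g n r a a₂ = some E)
    (ha' : ∃ E, mpEvalFst g₁ g n r a' a₂ = some E)
    (v : Fin g₁ → k) :
    ∃ (E₁ E₂ Ed : Matrix ((Fin n₁' × Fin n₁) × ∀ j, Fin (n j))
        ((Fin n₁' × Fin n₁) × ∀ j, Fin (n j)) k),
      mpEvalFst g₁ g n r (fun ℓ => a' ℓ ⊗ₖ (1 : Matrix (Fin n₁) (Fin n₁) k)) a₂ = some E₁ ∧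
      mpEvalFst g₁ g n r (fun ℓ => (1 : Matrix (Fin n₁') (Fin n₁') k) ⊗ₖ a ℓ) a₂ = some E₂ ∧
      RatExpr.eval
        (Sum.elim (fun ℓ => tauFst n (a' ℓ ⊗ₖ (1 : Matrix (Fin n₁) (Fin n₁) k)))
          (Sum.elim (fun ℓ => tauFst n ((1 : Matrix (Fin n₁') (Fin n₁') k) ⊗ₖ a ℓ))
            (fun w => tauTail n w.1 (a₂ w.1 w.2))))
        (sumList (List.ofFn fun j => RatExpr.mul (.const (v j)) (deltaOne j r)))
        = some Ed ∧
      mpEvalFst g₁ g n r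
        (fun j => Matrix.fromBlocks
          (a' j ⊗ₖ (1 : Matrix (Fin n₁) (Fin n₁) k))
          (v j • (1 : Matrix (Fin n₁' × Fin n₁) (Fin n₁' × Fin n₁) k))
          0
          ((1 : Matrix (Fin n₁') (Fin n₁') k) ⊗ₖ a j)) a₂
      = some (Matrix.reindex (Equiv.sumProdDistrib _ _ _).symm
          (Equiv.sumProdDistrib _ _ _).symm
          (Matrix.fromBlocks E₁ Ed 0 E₂)) :=
  mp_difference_differential_formula_general g₁ g n n₁ n₁' r a a' a₂ ha ha' v
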